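/- Let M be a complete pointed metric space with base point 0 = q, and let p ≠ q with [p,q] = {p,q}. Suppose μ in the closed unit ball of F(M) satisfies ⟨μ, f_{pq}⟩ = 1, where f_{pq} is the magic function. Then for every ε, α ∈ (0, 1/2), μ lies within distance 2ε of the subspace F([p,q]_α) (the closed span of Diracs of points of [p,q]_α). -/

import Mathlib

noncomputable section

open Metric Set

/-- The space of real-valued Lipschitz functions on `M` vanishing at `base`. -/
structure Lip0 (M : Type*) [MetricSpace M] (base : M) where
  toFun : M → ℝ
  exists_lip' : ∃ K, LipschitzWith K toFun
  map_base' : toFun base = 0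

namespace Lip0

variable {M : Type*} [MetricSpace M] {base : M}

instance : FunLike (Lip0 M base) M ℝ where
  coe := toFun
  coe_injective := by rintro ⟨f, _, _⟩ ⟨g, _, _⟩ h; simpa using h

@[simp] lemma map_base (f : Lip0 M base) : f base = 0 := f.map_base'

/-- The set of (nonnegative real) Lipschitz constants of `f`. -/
def lipSet (f : Lip0 M base) : Set ℝ :=
  {K | 0 ≤ K ∧ ∀ x y, |f x - f y| ≤ K * dist x y}

lemma lipSet_nonempty (f : Lip0 M base) : (lipSet f).Nonempty := by
  obtain ⟨K, hK⟩ := f.exists_lip'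
  exact ⟨K, K.coe_nonneg, fun x y => by
    have h := hK.dist_le_mul x y
    rw [Real.dist_eq] at h
    exact h⟩

lemma lipSet_bddBelow (f : Lip0 M base) : BddBelow (lipSet f) :=
  ⟨0, fun K hK => hK.1⟩

lemma sInf_mem_lipSet (f : Lip0 M base) : sInf (lipSet f) ∈ lipSet f := by
  constructor
  · exact le_csInf (lipSet_nonempty f) fun K hK => hK.1
  · intro x y
    rcases eq_or_ne x y with rfl | hxy
    · simp
    · have hd : 0 < dist x y := dist_pos.2 hxy
      rw [← div_le_iff₀ hd]
      exact le_csInf (lipSet_nonempty f) fun K hK => (div_le_iff₀ hd).2 (hK.2 x y)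

instance : Zero (Lip0 M base) :=
  ⟨⟨fun _ => 0, ⟨0, LipschitzWith.const 0⟩, rfl⟩⟩

instance : Add (Lip0 M base) :=
  ⟨fun f g => ⟨fun t => f t + g t, by
    obtain ⟨Kf, hf⟩ := f.exists_lip'; obtain ⟨Kg, hg⟩ := g.exists_lip'
    exact ⟨Kf + Kg, hf.add hg⟩, by simp⟩⟩

instance : Neg (Lip0 M base) :=
  ⟨fun f => ⟨fun t => -f t, by
    obtain ⟨Kf, hf⟩ := f.exists_lip'
    exact ⟨Kf, hf.neg⟩, by simp⟩⟩

def rsmul (c : ℝ) (f : Lip0 M base) : Lip0 M base :=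
  ⟨fun t => c * f t, by
    obtain ⟨Kf, hf⟩ := f.exists_lip'
    refine ⟨⟨|c|, abs_nonneg c⟩ * Kf, LipschitzWith.of_dist_le_mul fun x y => ?_⟩
    have h1 : dist (c * f x) (c * f y) = |c| * |f x - f y| := by
      rw [Real.dist_eq, ← abs_mul, mul_sub]
    have h2 := hf.dist_le_mul x y
    rw [Real.dist_eq] at h2
    rw [h1]
    calc |c| * |f x - f y| ≤ |c| * (Kf * dist x y) :=
          mul_le_mul_of_nonneg_left h2 (abs_nonneg c)
      _ = (⟨|c|, abs_nonneg c⟩ * Kf : NNReal) * dist x y := by show _ = |c| * (Kf : ℝ) * dist x y; ring, by simp⟩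

instance : SMul ℝ (Lip0 M base) := ⟨rsmul⟩
instance : SMul ℕ (Lip0 M base) := ⟨fun n => rsmul (n : ℝ)⟩
instance : SMul ℤ (Lip0 M base) := ⟨fun n => rsmul (n : ℝ)⟩
instance : Sub (Lip0 M base) := ⟨fun f g => f + -g⟩

@[simp] lemma coe_zero : ⇑(0 : Lip0 M base) = fun _ => 0 := rfl
@[simp] lemma coe_add (f g : Lip0 M base) : ⇑(f + g) = fun t => f t + g t := rfl
@[simp] lemma coe_neg (f : Lip0 M base) : ⇑(-f) = fun t => -f t := rfl
@[simp] lemma coe_smul (c : ℝ) (f : Lip0 M base) : ⇑(c • f) = fun t => c * f t := rfl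
@[simp] lemma coe_sub (f g : Lip0 M base) : ⇑(f - g) = fun t => f t - g t := by
  show (fun t => f t + -(g t)) = _
  funext t; ring

instance : AddCommGroup (Lip0 M base) :=
  (DFunLike.coe_injective (F := Lip0 M base)).addCommGroup _
    rfl (fun _ _ => rfl) (fun _ => rfl) (fun f g => coe_sub f g)
    (fun f n => by funext t; show (n : ℝ) * f t = n • f t; simp)
    (fun f n => by funext t; show (n : ℝ) * f t = n • f t; simp)

instance : Module ℝ (Lip0 M base) :=
  (DFunLike.coe_injective (F := Lip0 M base)).module ℝ
    { toFun := fun f : Lip0 M base => ⇑f, map_zero' := rfl, map_add' := fun _ _ => rfl }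
    (fun _ _ => rfl)

lemma lipSet_neg (f : Lip0 M base) : lipSet (-f) = lipSet f := by
  unfold lipSet
  ext K
  have e : ∀ x y : M, (-f) x - (-f) y = -(f x - f y) := fun x y => by
    show -f x - -f y = -(f x - f y); ring
  constructor <;> rintro ⟨h0, h⟩ <;> refine ⟨h0, fun x y => ?_⟩
  · have := h x y; rwa [e, abs_neg] at this
  · rw [e, abs_neg]; exact h x y

instance : NormedAddCommGroup (Lip0 M base) :=
  AddGroupNorm.toNormedAddCommGroup
  { toFun := fun f => sInf (lipSet f)
    map_zero' := by
      apply le_antisymm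
      · exact csInf_le (lipSet_bddBelow _) ⟨le_refl 0, fun x y => by simp⟩
      · exact (sInf_mem_lipSet (0 : Lip0 M base)).1
    add_le' := fun f g => by
      apply csInf_le (lipSet_bddBelow _)
      refine ⟨add_nonneg (sInf_mem_lipSet f).1 (sInf_mem_lipSet g).1, fun x y => ?_⟩
      have hf := (sInf_mem_lipSet f).2 x y
      have hg := (sInf_mem_lipSet g).2 x y
      calc |(f + g) x - (f + g) y| = |(f x - f y) + (g x - g y)| := by
            simp [coe_add]; ring_nf
        _ ≤ |f x - f y| + |g x - g y| := abs_add_le _ _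
        _ ≤ sInf (lipSet f) * dist x y + sInf (lipSet g) * dist x y := add_le_add hf hg
        _ = (sInf (lipSet f) + sInf (lipSet g)) * dist x y := by ring
    neg' := fun f => by show sInf (lipSet (-f)) = sInf (lipSet f); rw [lipSet_neg]
    eq_zero_of_map_eq_zero' := fun f hf => by
      have hf' : sInf (lipSet f) = 0 := hf
      apply DFunLike.coe_injective
      funext t
      have h := (sInf_mem_lipSet f).2 t base
      rw [hf', zero_mul] at h
      have h0 : f t - f base = 0 := abs_nonpos_iff.1 h
      show f t = (0 : Lip0 M base) t
      have : (0 : Lip0 M base) t = 0 := rfl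
      rw [this]
      simpa using h0 }

lemma norm_def (f : Lip0 M base) : ‖f‖ = sInf (lipSet f) := rfl

instance : NormedSpace ℝ (Lip0 M base) where
  norm_smul_le c f := by
    rw [norm_def, norm_def, Real.norm_eq_abs]
    apply csInf_le (lipSet_bddBelow _)
    refine ⟨mul_nonneg (abs_nonneg c) (sInf_mem_lipSet f).1, fun x y => ?_⟩
    have hf := (sInf_mem_lipSet f).2 x y
    calc |(c • f) x - (c • f) y| = |c| * |f x - f y| := by
          rw [coe_smul]; rw [← abs_mul]; ring_nf
      _ ≤ |c| * (sInf (lipSet f) * dist x y) :=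
          mul_le_mul_of_nonneg_left hf (abs_nonneg c)
      _ = |c| * sInf (lipSet f) * dist x y := by ring

lemma norm_apply_le (f : Lip0 M base) (x y : M) : |f x - f y| ≤ ‖f‖ * dist x y :=
  (sInf_mem_lipSet f).2 x y

end Lip0

open Lip0 NormedSpace

variable (M : Type*) [MetricSpace M]

/-- The Dirac evaluation functional at `x`. -/
def deltaF (base x : M) : StrongDual ℝ (Lip0 M base) :=
  LinearMap.mkContinuous
    { toFun := fun f => f x
      map_add' := fun _ _ => rfl
      map_smul' := fun _ _ => rfl }
    (dist x base)
    (fun f => by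
      have h := Lip0.norm_apply_le f x base
      simp only [Lip0.map_base, sub_zero] at h
      rw [Real.norm_eq_abs, mul_comm]; exact h)

variable {M}

@[simp] lemma deltaF_apply (base x : M) (f : Lip0 M base) : deltaF M base x f = f x := rfl

/-- The molecule `(δ x - δ y)/d(x,y)`. -/
def molecule (base x y : M) : StrongDual ℝ (Lip0 M base) :=
  (dist x y)⁻¹ • (deltaF M base x - deltaF M base y)

variable (M) in
/-- The Lipschitz-free space over `M`, realized as the closed linear span of the Dirac
evaluations inside the dual of `Lip0 M base`. -/
def FreeSpace (base : M) : Submodule ℝ (StrongDual ℝ (Lip0 M base)) :=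
  (Submodule.span ℝ (Set.range (deltaF M base))).topologicalClosure

variable (M) in
/-- The subspace of the free space generated by the Diracs of a subset `S ⊆ M`. -/
def FreeSpaceOn (base : M) (S : Set M) : Submodule ℝ (StrongDual ℝ (Lip0 M base)) :=
  (Submodule.span ℝ (deltaF M base '' S)).topologicalClosure

lemma deltaF_mem (base x : M) : deltaF M base x ∈ FreeSpace M base :=
  Submodule.le_topologicalClosure _ (Submodule.subset_span ⟨x, rfl⟩)

lemma molecule_mem (base x y : M) : molecule base x y ∈ FreeSpace M base :=
  Submodule.smul_mem _ _ (Submodule.sub_mem _ (deltaF_mem base x) (deltaF_mem base y))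

/-- The molecule as an element of the free space. -/
def mol (base x y : M) : ↥(FreeSpace M base) := ⟨molecule base x y, molecule_mem base x y⟩

/-- The "magic function" of Ivakhno, Kadets and Werner associated to the pair `(p, q)`,
with base point `o`. -/
def magicFun (o p q : M) (t : M) : ℝ :=
  (dist p q / 2) *
    ((dist t q - dist t p) / (dist t q + dist t p) -
      (dist o q - dist o p) / (dist o q + dist o p))

/-! If `‖μ‖ ≤ 1` and `⟨μ, f⟩ = 1` for a 1-Lipschitz `f`, then a finite transport plan of
almost minimal cost for an approximant of `μ` almost realises its whole cost on `f`. With base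
point `q`, `f_{pq}(t) = d(p,q) d(t,q) / (d(t,q) + d(t,p))` satisfies
`|f_{pq}(x) - f_{pq}(y)| ≤ (1 - α) d(x,y)` as soon as `x ∉ [p,q]_α`, so the moves of the plan
leaving `[p,q]_α` are arbitrarily cheap, and `μ` even lies in `F([p,q]_α)`. That the cost of
an optimal plan is the norm of `F(M)` is Hahn–Banach for the cost seminorm. -/

theorem Seminorm.exists_dual_apply_eq_and_le {E : Type*} [AddCommGroup E] [Module ℝ E]
    (p : Seminorm ℝ E) (x : E) : ∃ φ : Module.Dual ℝ E, φ x = p x ∧ ∀ y, φ y ≤ p y := by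
  have hker : ∀ c : ℝ, c • x = 0 → (RingHom.id ℝ) c • p x = 0 := fun c hc => by
    have : |c * p x| = 0 := by
      rw [abs_mul, abs_of_nonneg (apply_nonneg p x), ← Real.norm_eq_abs, ← map_smul_eq_mul, hc,
        map_zero]
    simpa using this
  set f := LinearPMap.mkSpanSingleton' x (p x) hker
  have hfp : ∀ y : f.domain, f y ≤ p y := by
    rintro ⟨y, hy⟩
    obtain ⟨c, rfl⟩ := Submodule.mem_span_singleton.1 hy
    rw [LinearPMap.mkSpanSingleton'_apply, map_smul_eq_mul, RingHom.id_apply, smul_eq_mul,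
      Real.norm_eq_abs]
    exact mul_le_mul_of_nonneg_right (le_abs_self c) (apply_nonneg p x)
  obtain ⟨φ, hφf, hφp⟩ := Module.Dual.exists_extension_of_le_seminorm_real f.domain f.toFun hfp
  refine ⟨φ, ?_, fun y => (le_abs_self _).trans (hφp y)⟩
  exact (hφf ⟨x, Submodule.mem_span_singleton_self x⟩).trans
    (LinearPMap.mkSpanSingleton'_apply_self x (p x) hker _)

namespace Lip0

lemma norm_le_of_lipschitzWith {base : M} {f : Lip0 M base} {K : NNReal} (hf : LipschitzWith K f) :
    ‖f‖ ≤ K :=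
  csInf_le (lipSet_bddBelow f)
    ⟨K.2, fun x y => by simpa only [Real.dist_eq] using hf.dist_le_mul x y⟩

end Lip0

lemma deltaF_self (q : M) : deltaF M q q = 0 := by
  ext f
  simp

lemma norm_deltaF_sub_le (q x y : M) : ‖deltaF M q x - deltaF M q y‖ ≤ dist x y :=
  ContinuousLinearMap.opNorm_le_bound _ dist_nonneg fun f => by
    simpa [Real.norm_eq_abs, mul_comm] using Lip0.norm_apply_le f x y

section TransportPlan

variable (q : M)

/-- A transport plan `{(a, x, y)}` stands for the finitely supported element
`∑ a • (δ x - δ y)` of `F(M)`. -/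
def planSum (l : Multiset (ℝ × M × M)) : StrongDual ℝ (Lip0 M q) :=
  (l.map fun t => t.1 • (deltaF M q t.2.1 - deltaF M q t.2.2)).sum

def planCost (l : Multiset (ℝ × M × M)) : ℝ :=
  (l.map fun t => |t.1| * dist t.2.1 t.2.2).sum

variable {q}

lemma planCost_nonneg (l : Multiset (ℝ × M × M)) : 0 ≤ planCost l :=
  Multiset.sum_nonneg fun _ ht => by
    obtain ⟨t, -, rfl⟩ := Multiset.mem_map.1 ht
    positivity

lemma planSum_add (l₁ l₂ : Multiset (ℝ × M × M)) :
    planSum q (l₁ + l₂) = planSum q l₁ + planSum q l₂ := by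
  simp only [planSum, Multiset.map_add, Multiset.sum_add]

lemma planCost_add (l₁ l₂ : Multiset (ℝ × M × M)) :
    planCost (l₁ + l₂) = planCost l₁ + planCost l₂ := by
  simp only [planCost, Multiset.map_add, Multiset.sum_add]

lemma planSum_map_smul (c : ℝ) (l : Multiset (ℝ × M × M)) :
    planSum q (l.map fun t => (c * t.1, t.2)) = c • planSum q l := by
  simp only [planSum, Multiset.map_map, Function.comp_def, Multiset.smul_sum, mul_smul]

lemma planCost_map_smul (c : ℝ) (l : Multiset (ℝ × M × M)) :
    planCost (l.map fun t => (c * t.1, t.2)) = |c| * planCost l := by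
  simp only [planCost, Multiset.map_map, Function.comp_def, ← Multiset.sum_map_mul_left,
    abs_mul, mul_assoc]

lemma planSum_singleton (x y : M) : planSum q {(1, x, y)} = deltaF M q x - deltaF M q y := by
  simp [planSum]

lemma planCost_singleton (x y : M) : planCost ({(1, x, y)} : Multiset (ℝ × M × M)) = dist x y := by
  simp [planCost]

lemma norm_planSum_le (l : Multiset (ℝ × M × M)) : ‖planSum q l‖ ≤ planCost l := by
  refine (norm_multiset_sum_le _).trans ?_
  rw [Multiset.map_map]
  refine Multiset.sum_map_le_sum_map _ _ fun t _ => ?_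
  rw [Function.comp_apply, norm_smul, Real.norm_eq_abs]
  exact mul_le_mul_of_nonneg_left (norm_deltaF_sub_le q _ _) (abs_nonneg _)

lemma planSum_apply_le {l : Multiset (ℝ × M × M)} {f : Lip0 M q} {K : ℝ}
    (h : ∀ t ∈ l, |f t.2.1 - f t.2.2| ≤ K * dist t.2.1 t.2.2) :
    planSum q l f ≤ K * planCost l := by
  change ContinuousLinearMap.apply ℝ ℝ f (planSum q l) ≤ _
  rw [planSum, map_multiset_sum, planCost,
    ← Multiset.sum_map_mul_left, Multiset.map_map]
  refine Multiset.sum_map_le_sum_map _ _ fun t ht => ?_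
  simp only [Function.comp_apply, ContinuousLinearMap.apply_apply,
    smul_apply, sub_apply, deltaF_apply, smul_eq_mul]
  calc t.1 * (f t.2.1 - f t.2.2) ≤ |t.1| * |f t.2.1 - f t.2.2| := by
        rw [← abs_mul]; exact le_abs_self _
    _ ≤ |t.1| * (K * dist t.2.1 t.2.2) := mul_le_mul_of_nonneg_left (h t ht) (abs_nonneg _)
    _ = K * (|t.1| * dist t.2.1 t.2.2) := by ring

lemma planSum_mem_span {S : Set M} {l : Multiset (ℝ × M × M)}
    (h : ∀ t ∈ l, t.2.1 ∈ S ∧ t.2.2 ∈ S) : planSum q l ∈ Submodule.span ℝ (deltaF M q '' S) := by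
  refine multiset_sum_mem _ fun v hv => ?_
  obtain ⟨t, ht, rfl⟩ := Multiset.mem_map.1 hv
  exact Submodule.smul_mem _ _ (Submodule.sub_mem _
    (Submodule.subset_span ⟨_, (h t ht).1, rfl⟩) (Submodule.subset_span ⟨_, (h t ht).2, rfl⟩))

lemma exists_planSum_eq {m : StrongDual ℝ (Lip0 M q)}
    (hm : m ∈ Submodule.span ℝ (range (deltaF M q))) : ∃ l, planSum q l = m := by
  induction hm using Submodule.span_induction with
  | mem x hx =>
    obtain ⟨z, rfl⟩ := hx
    exact ⟨{(1, z, q)}, by rw [planSum_singleton, deltaF_self, sub_zero]⟩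
  | zero => exact ⟨0, rfl⟩
  | add u v _ _ hu hv =>
    obtain ⟨l₁, rfl⟩ := hu
    obtain ⟨l₂, rfl⟩ := hv
    exact ⟨l₁ + l₂, planSum_add l₁ l₂⟩
  | smul c u _ hu =>
    obtain ⟨l, rfl⟩ := hu
    exact ⟨_, planSum_map_smul c l⟩

end TransportPlan

section TransportCost

variable (q : M)

/-- The Kantorovich–Rubinstein transport cost; it is only meaningful on
`span (range δ)`, elsewhere it is `sInf ∅ = 0`. -/
def transportCost (m : StrongDual ℝ (Lip0 M q)) : ℝ :=
  sInf (planCost '' {l | planSum q l = m})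

variable {q}

lemma transportCost_le_planCost {m : StrongDual ℝ (Lip0 M q)} {l : Multiset (ℝ × M × M)}
    (h : planSum q l = m) : transportCost q m ≤ planCost l :=
  csInf_le ⟨0, forall_mem_image.2 fun l _ => planCost_nonneg l⟩ ⟨l, h, rfl⟩

lemma le_transportCost {m : StrongDual ℝ (Lip0 M q)}
    (hm : m ∈ Submodule.span ℝ (range (deltaF M q))) {c : ℝ}
    (h : ∀ l, planSum q l = m → c ≤ planCost l) : c ≤ transportCost q m :=
  le_csInf (Set.Nonempty.image planCost (exists_planSum_eq hm)) (forall_mem_image.2 h)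

variable (q) in
def transportSeminorm : Seminorm ℝ (Submodule.span ℝ (range (deltaF M q))) :=
  Seminorm.ofSMulLE (fun v => transportCost q v)
    (le_antisymm (transportCost_le_planCost (l := 0) rfl)
      (le_transportCost (Submodule.zero_mem _) fun l _ => planCost_nonneg l))
    (fun u v => by
      have key : ∀ l₁ l₂, planSum q l₁ = u → planSum q l₂ = v →
          transportCost q ↑(u + v) ≤ planCost l₁ + planCost l₂ := fun l₁ l₂ h₁ h₂ => by
        rw [← planCost_add]
        exact transportCost_le_planCost (by rw [planSum_add, h₁, h₂]; rfl)
      rw [← sub_le_iff_le_add']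
      refine le_transportCost v.2 fun l₂ h₂ => ?_
      rw [sub_le_iff_le_add', ← sub_le_iff_le_add]
      exact le_transportCost u.2 fun l₁ h₁ => sub_le_iff_le_add.2 (key l₁ l₂ h₁ h₂))
    (fun c v => by
      rcases eq_or_ne c 0 with rfl | hc
      · refine (transportCost_le_planCost (l := 0) ?_).trans_eq ?_
        · simp [planSum]
        · simp [planCost]
      rw [Real.norm_eq_abs, mul_comm, ← div_le_iff₀ (abs_pos.2 hc)]
      refine le_transportCost v.2 fun l hl => ?_
      rw [div_le_iff₀ (abs_pos.2 hc), mul_comm, ← planCost_map_smul]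
      exact transportCost_le_planCost (by rw [planSum_map_smul, hl]; rfl))

lemma transportSeminorm_apply (v : Submodule.span ℝ (range (deltaF M q))) :
    transportSeminorm q v = transportCost q v := rfl

lemma exists_lip0_of_le_transportCost (φ : Module.Dual ℝ (Submodule.span ℝ (range (deltaF M q))))
    (hφ : ∀ v, φ v ≤ transportCost q v) :
    ∃ f : Lip0 M q, ‖f‖ ≤ 1 ∧ ∀ v, φ v = (v : StrongDual ℝ (Lip0 M q)) f := by
  let δ (z : M) : Submodule.span ℝ (range (deltaF M q)) :=
    ⟨deltaF M q z, Submodule.subset_span ⟨z, rfl⟩⟩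
  have hlip : LipschitzWith 1 fun z => φ (δ z) := LipschitzWith.of_le_add fun x y => by
    rw [← sub_le_iff_le_add', ← map_sub]
    exact (hφ _).trans ((transportCost_le_planCost (planSum_singleton x y)).trans_eq
      (planCost_singleton x y))
  have hq : φ (δ q) = 0 := by
    rw [show δ q = 0 from Subtype.ext (deltaF_self q), map_zero]
  let f : Lip0 M q := ⟨fun z => φ (δ z), ⟨1, hlip⟩, hq⟩
  refine ⟨f, Lip0.norm_le_of_lipschitzWith (f := f) hlip, fun v => ?_⟩
  have : φ = (ContinuousLinearMap.apply ℝ ℝ f).toLinearMap ∘ₗ Submodule.subtype _ := by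
    refine LinearMap.ext_on Submodule.span_span_coe_preimage fun v hv => ?_
    obtain ⟨z, hz⟩ := hv
    rw [show v = δ z from Subtype.ext hz.symm]
    rfl
  exact LinearMap.congr_fun this v

lemma transportCost_le_norm {m : StrongDual ℝ (Lip0 M q)}
    (hm : m ∈ Submodule.span ℝ (range (deltaF M q))) : transportCost q m ≤ ‖m‖ := by
  obtain ⟨φ, hφm, hφ⟩ := (transportSeminorm q).exists_dual_apply_eq_and_le ⟨m, hm⟩
  obtain ⟨f, hf, hφf⟩ := exists_lip0_of_le_transportCost φ hφ
  calc transportCost q m = m f := by rw [← transportSeminorm_apply ⟨m, hm⟩, ← hφm, hφf]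
    _ ≤ ‖m f‖ := Real.le_norm_self _
    _ ≤ ‖m‖ * ‖f‖ := m.le_opNorm f
    _ ≤ ‖m‖ := mul_le_of_le_one_right (norm_nonneg m) hf

lemma exists_planSum_eq_planCost_lt {m : StrongDual ℝ (Lip0 M q)}
    (hm : m ∈ Submodule.span ℝ (range (deltaF M q))) {δ : ℝ} (hδ : 0 < δ) :
    ∃ l, planSum q l = m ∧ planCost l < ‖m‖ + δ := by
  obtain ⟨_, ⟨l, hl, rfl⟩, hlt⟩ :=
    exists_lt_of_csInf_lt (Set.Nonempty.image planCost (exists_planSum_eq hm))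
      ((transportCost_le_norm hm).trans_lt (lt_add_of_pos_right _ hδ))
  exact ⟨l, hl, hlt⟩

end TransportCost

section MagicFunction

variable {p q : M}

/-- The set `[p,q]_α`. -/
def approxSegment (p q : M) (α : ℝ) : Set M :=
  {x | dist p x + dist x q ≤ dist p q / (1 - α)}

lemma dist_le_dist_add_dist (p q x : M) : dist p q ≤ dist x q + dist x p :=
  (dist_triangle_left p q x).trans_eq (add_comm _ _)

lemma magicFun_right_eq (hpq : p ≠ q) (t : M) :
    magicFun q p q t = dist p q * dist t q / (dist t q + dist t p) := by
  have hd : dist p q ≠ 0 := dist_ne_zero.2 hpq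
  have ht : dist t q + dist t p ≠ 0 :=
    ((dist_pos.2 hpq).trans_le (dist_le_dist_add_dist p q t)).ne'
  rw [magicFun, dist_self, dist_comm q p]
  field_simp
  ring

lemma abs_magicFun_sub_le (hpq : p ≠ q) (x y : M) :
    |magicFun q p q x - magicFun q p q y| ≤ dist p q / (dist x q + dist x p) * dist x y := by
  have hx := (dist_pos.2 hpq).trans_le (dist_le_dist_add_dist p q x)
  have hy := (dist_pos.2 hpq).trans_le (dist_le_dist_add_dist p q y)
  have hcross : |dist x q * dist y p - dist y q * dist x p| ≤
      (dist y q + dist y p) * dist x y := by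
    have h₁ : |dist x q - dist y q| ≤ dist x y := abs_dist_sub_le x y q
    have h₂ : |dist y p - dist x p| ≤ dist x y := by
      rw [dist_comm x y]; exact abs_dist_sub_le y x p
    calc |dist x q * dist y p - dist y q * dist x p|
        = |dist y p * (dist x q - dist y q) + dist y q * (dist y p - dist x p)| := by ring_nf
      _ ≤ dist y p * |dist x q - dist y q| + dist y q * |dist y p - dist x p| := by
        refine (abs_add_le _ _).trans_eq ?_
        rw [abs_mul, abs_mul, abs_of_nonneg dist_nonneg, abs_of_nonneg dist_nonneg]
      _ ≤ dist y p * dist x y + dist y q * dist x y := by gcongr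
      _ = (dist y q + dist y p) * dist x y := by ring
  have hdiff : magicFun q p q x - magicFun q p q y = dist p q / (dist x q + dist x p) *
      ((dist x q * dist y p - dist y q * dist x p) / (dist y q + dist y p)) := by
    rw [magicFun_right_eq hpq, magicFun_right_eq hpq]
    field_simp
    ring
  rw [hdiff, abs_mul, abs_of_nonneg (by positivity), abs_div, abs_of_pos hy]
  gcongr
  rwa [div_le_iff₀' hy]

lemma abs_magicFun_sub_le_dist (hpq : p ≠ q) (x y : M) :
    |magicFun q p q x - magicFun q p q y| ≤ dist x y := by
  refine (abs_magicFun_sub_le hpq x y).trans (mul_le_of_le_one_left dist_nonneg ?_)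
  exact div_le_one_of_le₀ (dist_le_dist_add_dist p q x) (by positivity)

lemma abs_magicFun_sub_le_of_notMem (hpq : p ≠ q) {α : ℝ} (hα : α < 1) {x : M}
    (hx : x ∉ approxSegment p q α) (y : M) :
    |magicFun q p q x - magicFun q p q y| ≤ (1 - α) * dist x y := by
  refine (abs_magicFun_sub_le hpq x y).trans (mul_le_mul_of_nonneg_right ?_ dist_nonneg)
  have hx' : dist p q / (1 - α) < dist x q + dist x p := by
    simpa [approxSegment, dist_comm p x, add_comm] using hx
  rw [div_lt_iff₀ (sub_pos.2 hα)] at hx'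
  rw [div_le_iff₀ ((dist_pos.2 hpq).trans_le (dist_le_dist_add_dist p q x))]
  linarith

end MagicFunction

section Norming

variable {q : M} {S : Set M} {α : ℝ} {f : Lip0 M q}

open scoped Classical in
lemma mul_planCost_filter_notMem_le (hf : ‖f‖ ≤ 1)
    (hfS : ∀ x y, x ∉ S → |f x - f y| ≤ (1 - α) * dist x y) (l : Multiset (ℝ × M × M)) :
    α * planCost (l.filter fun t => ¬(t.2.1 ∈ S ∧ t.2.2 ∈ S)) ≤ planCost l - planSum q l f := by
  set good := l.filter fun t => t.2.1 ∈ S ∧ t.2.2 ∈ S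
  set bad := l.filter fun t => ¬(t.2.1 ∈ S ∧ t.2.2 ∈ S)
  have hsplit : l = good + bad := (Multiset.filter_add_not _ l).symm
  have hgood : planSum q good f ≤ 1 * planCost good := planSum_apply_le fun t _ =>
    (f.norm_apply_le _ _).trans (mul_le_mul_of_nonneg_right hf dist_nonneg)
  have hbad : planSum q bad f ≤ (1 - α) * planCost bad := planSum_apply_le fun t ht => by
    rcases not_and_or.1 (Multiset.mem_filter.1 ht).2 with h | h
    · exact hfS _ _ h
    · rw [abs_sub_comm, dist_comm]; exact hfS _ _ h
  rw [hsplit, planSum_add, planCost_add, add_apply]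
  linarith

theorem mem_freeSpaceOn_of_apply_eq_one (hα : 0 < α) (hf : ‖f‖ ≤ 1)
    (hfS : ∀ x y, x ∉ S → |f x - f y| ≤ (1 - α) * dist x y)
    {μ : StrongDual ℝ (Lip0 M q)} (hμF : μ ∈ FreeSpace M q) (hμ : ‖μ‖ ≤ 1) (hμf : μ f = 1) :
    μ ∈ FreeSpaceOn M q S := by
  classical
  refine Metric.mem_closure_iff.2 fun ε hε => ?_
  -- chosen so that `δ + 3δ/α < ε`; the bad part of the plan will cost less than `3δ/α`
  set δ := ε * α / (α + 4)
  have hδ : 0 < δ := by positivity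
  have hδε : δ * (α + 4) = ε * α := by simp only [δ]; field_simp
  obtain ⟨m, hmV, hμm⟩ := Metric.mem_closure_iff.1 hμF δ hδ
  obtain ⟨l, rfl, hl⟩ := exists_planSum_eq_planCost_lt hmV hδ
  rw [dist_eq_norm] at hμm
  have hm : ‖planSum q l‖ ≤ 1 + δ := by
    have := norm_sub_norm_le (planSum q l) μ
    rw [norm_sub_rev] at this
    linarith
  have hlf : 1 - δ ≤ planSum q l f := by
    have h := (Real.le_norm_self _).trans (((μ - planSum q l).le_opNorm f).trans
      (mul_le_of_le_one_right (norm_nonneg _) hf))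
    rw [sub_apply, hμf] at h
    linarith
  have hbad := mul_planCost_filter_notMem_le hf hfS l
  set good := l.filter fun t => t.2.1 ∈ S ∧ t.2.2 ∈ S
  set bad := l.filter fun t => ¬(t.2.1 ∈ S ∧ t.2.2 ∈ S)
  have hsplit : planSum q l = planSum q good + planSum q bad := by
    rw [← planSum_add, Multiset.filter_add_not]
  refine ⟨planSum q good, planSum_mem_span fun t ht => (Multiset.mem_filter.1 ht).2, ?_⟩
  have hαμm := mul_lt_mul_of_pos_left hμm hα
  calc dist μ (planSum q good) = ‖(μ - planSum q l) + planSum q bad‖ := by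
        rw [dist_eq_norm, hsplit, sub_add_eq_sub_sub, sub_add_cancel]
    _ ≤ ‖μ - planSum q l‖ + planCost bad :=
        (norm_add_le _ _).trans (by gcongr; exact norm_planSum_le bad)
    _ < ε := lt_of_mul_lt_mul_left (by linarith) hα.le

end Norming

theorem stmt_12_general {M : Type*} [MetricSpace M] (p q : M) (hpq : p ≠ q)
    (μ : StrongDual ℝ (Lip0 M q)) (hμF : μ ∈ FreeSpace M q) (hμ1 : ‖μ‖ ≤ 1)
    (g : Lip0 M q) (hg : ∀ t, g t = magicFun q p q t) (hpair : μ g = 1)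
    (ε α : ℝ) (hε : ε ∈ Set.Ioo (0 : ℝ) (1/2)) (hα : α ∈ Set.Ioo (0 : ℝ) (1/2)) :
    ∃ ν ∈ FreeSpaceOn M q {x : M | dist p x + dist x q ≤ dist p q / (1 - α)},
      ‖μ - ν‖ ≤ 2 * ε := by
  have hg1 : ‖g‖ ≤ 1 := Lip0.norm_le_of_lipschitzWith (K := 1) <|
    LipschitzWith.of_dist_le_mul fun x y => by
      simpa [Real.dist_eq, hg] using abs_magicFun_sub_le_dist hpq x y
  have hgS : ∀ x y, x ∉ approxSegment p q α → |g x - g y| ≤ (1 - α) * dist x y :=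
    fun x y hx => by
      simpa only [hg] using abs_magicFun_sub_le_of_notMem hpq (by linarith [hα.2]) hx y
  refine ⟨μ, mem_freeSpaceOn_of_apply_eq_one hα.1 hg1 hgS hμF hμ1 hpair, ?_⟩
  rw [sub_self, norm_zero]
  linarith [hε.1]

/-- Lemma 5: if `[p,q] = {p,q}`, `μ` is in the unit ball of `F(M)` (base point `q`) and
`⟨μ, f_{pq}⟩ = 1`, then for all `ε, α ∈ (0, 1/2)` the element `μ` lies within distance
`2ε` of `F([p,q]_α)`. -/
theorem stmt_12 {M : Type*} [MetricSpace M] [CompleteSpace M] (p q : M) (hpq : p ≠ q)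
    (hseg : {z : M | dist p q = dist z p + dist z q} = {p, q})
    (μ : StrongDual ℝ (Lip0 M q)) (hμF : μ ∈ FreeSpace M q) (hμ1 : ‖μ‖ ≤ 1)
    (g : Lip0 M q) (hg : ∀ t, g t = magicFun q p q t) (hpair : μ g = 1)
    (ε α : ℝ) (hε : ε ∈ Set.Ioo (0 : ℝ) (1/2)) (hα : α ∈ Set.Ioo (0 : ℝ) (1/2)) :
    ∃ ν ∈ FreeSpaceOn M q {x : M | dist p x + dist x q ≤ dist p q / (1 - α)},
      ‖μ - ν‖ ≤ 2 * ε :=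
  stmt_12_general p q hpq μ hμF hμ1 g hg hpair ε α hε hα
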